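/- arXiv:2401.14710 — 2 statements merged into one kernel-verified Lean document; each statement's English description precedes it below -/
import Mathlib

section
/- For every t in (0,1], the ratio α_t = t / (1 - 2·h⁻¹(1-t))² satisfies α_t > log₂(e)/2. -/
/-!
Put `x = h⁻¹(1 - t)`, so that `t = 1 - h(x)`. The claim is the quadratic lower bound
`ln 2 - H(x) > (1 - 2x)² / 2` on the entropy deficit, `H` the natural-log binary entropy.
Both sides vanish at `x = 1/2`, and on `[0, 1/2]` the derivative of `H(x) + (1 - 2x)² / 2` is
`log(1 + s) - log(1 - s) - 2s` with `s = 1 - 2x`, which is positive because every term of the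
power series of `log(1 + s) - log(1 - s)` is.
-/

open Real

lemma two_mul_lt_log_one_add_sub_log_one_sub {s : ℝ} (hs0 : 0 < s) (hs1 : s < 1) :
    2 * s < log (1 + s) - log (1 - s) := by
  have hsum := hasSum_log_sub_log_of_abs_lt_one (abs_lt.2 ⟨by linarith, hs1⟩)
  calc 2 * s < ∑ k ∈ Finset.range 2, 2 * (1 / (2 * (k : ℝ) + 1)) * s ^ (2 * k + 1) := by
        norm_num [Finset.sum_range_succ]; positivity
    _ ≤ log (1 + s) - log (1 - s) :=
        sum_le_hasSum _ (fun k _ => by positivity) hsum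

lemma two_mul_one_sub_two_mul_lt_log_one_sub_sub_log {p : ℝ} (hp0 : 0 < p) (hp : p < 2⁻¹) :
    2 * (1 - 2 * p) < log (1 - p) - log p := by
  have h := two_mul_lt_log_one_add_sub_log_one_sub (s := 1 - 2 * p) (by linarith) (by linarith)
  rw [show 1 + (1 - 2 * p) = 2 * (1 - p) by ring, show 1 - (1 - 2 * p) = 2 * p by ring,
    log_mul two_ne_zero (by linarith), log_mul two_ne_zero hp0.ne'] at h
  linarith

lemma binEntropy_add_sq_strictMonoOn :
    StrictMonoOn (fun p => binEntropy p + (1 - 2 * p) ^ 2 / 2) (Set.Icc 0 2⁻¹) := by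
  refine strictMonoOn_of_deriv_pos (convex_Icc 0 2⁻¹) (by fun_prop) fun p hp => ?_
  rw [interior_Icc] at hp
  obtain ⟨hp0, hp⟩ := hp
  have hderiv : HasDerivAt (fun p => binEntropy p + (1 - 2 * p) ^ 2 / 2)
      (log (1 - p) - log p - 2 * (1 - 2 * p)) p := by
    have hsq : HasDerivAt (fun p : ℝ => (1 - 2 * p) ^ 2 / 2) (-(2 * (1 - 2 * p))) p := by
      refine ((((hasDerivAt_id' p).const_mul 2).const_sub 1).fun_pow 2).div_const 2
        |>.congr_deriv ?_
      norm_num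
      ring
    exact (hasDerivAt_binEntropy hp0.ne' (by linarith)).add hsq
  rw [hderiv.deriv]
  exact sub_pos.2 (two_mul_one_sub_two_mul_lt_log_one_sub_sub_log hp0 hp)

lemma binEntropy_lt_log_two_sub_sq {p : ℝ} (hp : p ∈ Set.Icc (0 : ℝ) 1) (hp2 : p ≠ 2⁻¹) :
    binEntropy p < log 2 - (1 - 2 * p) ^ 2 / 2 := by
  suffices key : ∀ q ∈ Set.Icc (0 : ℝ) 2⁻¹, q ≠ 2⁻¹ →
      binEntropy q < log 2 - (1 - 2 * q) ^ 2 / 2 by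
    rcases le_or_gt p 2⁻¹ with hle | hgt
    · exact key p ⟨hp.1, hle⟩ hp2
    · have := key (1 - p) ⟨by linarith [hp.2], by linarith⟩ (by linarith)
      rw [binEntropy_one_sub] at this
      linarith
  intro q hq hq2
  have := binEntropy_add_sq_strictMonoOn hq ⟨by norm_num, le_rfl⟩ (lt_of_le_of_ne hq.2 hq2)
  have hhalf : (1 - 2 * (2 : ℝ)⁻¹) ^ 2 / 2 = 0 := by norm_num
  simp only [binEntropy_two_inv, hhalf, add_zero] at this
  linarith

noncomputable def hbin (x : ℝ) : ℝ := -x * Real.logb 2 x - (1 - x) * Real.logb 2 (1 - x)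

lemma hbin_eq_binEntropy_div_log_two (x : ℝ) : hbin x = binEntropy x / log 2 := by
  simp only [hbin, binEntropy, logb, log_inv]
  ring

lemma hbin_two_inv : hbin 2⁻¹ = 1 := by
  rw [hbin_eq_binEntropy_div_log_two, binEntropy_two_inv, div_self (log_pos one_lt_two).ne']

lemma logb_exp_one_div_two_mul_sq_lt_one_sub_hbin {x : ℝ} (hx : x ∈ Set.Icc (0 : ℝ) 1)
    (hx2 : x ≠ 2⁻¹) : logb 2 (exp 1) / 2 * (1 - 2 * x) ^ 2 < 1 - hbin x := by
  have hlog2 := log_pos one_lt_two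
  calc logb 2 (exp 1) / 2 * (1 - 2 * x) ^ 2 = (1 - 2 * x) ^ 2 / 2 / log 2 := by
        rw [logb, log_exp]; ring
    _ < (log 2 - binEntropy x) / log 2 := by
        gcongr; linarith [binEntropy_lt_log_two_sub_sq hx hx2]
    _ = 1 - hbin x := by
        rw [hbin_eq_binEntropy_div_log_two, one_sub_div hlog2.ne']

/-- For every `t ∈ (0,1]`, `α_t = t / (1 - 2 h⁻¹(1-t))²  >  log₂(e)/2`. -/
theorem alpha_gt_half_log2e (hinv : ℝ → ℝ)
    (hhinv : ∀ y ∈ Set.Icc (0:ℝ) 1, hinv y ∈ Set.Icc (0:ℝ) (1/2) ∧ hbin (hinv y) = y)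
    (t : ℝ) (ht0 : 0 < t) (ht1 : t ≤ 1) :
    Real.logb 2 (Real.exp 1) / 2 < t / (1 - 2 * hinv (1 - t))^2 := by
  obtain ⟨⟨hx0, hx2⟩, hval⟩ := hhinv (1 - t) ⟨by linarith, by linarith⟩
  set x := hinv (1 - t)
  have hne : x ≠ 2⁻¹ := by
    rintro hx
    rw [hx, hbin_two_inv] at hval
    linarith
  have hbound := logb_exp_one_div_two_mul_sq_lt_one_sub_hbin ⟨hx0, by linarith⟩ hne
  have hlt : x < 1 / 2 := lt_of_le_of_ne hx2 (by rwa [one_div])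
  rw [lt_div_iff₀ (pow_pos (by linarith) 2)]
  linarith
end

section
/- Let ψ_t(x) = h(h⁻¹(1-t) ⋆ h⁻¹(x)) - (1-t) for x ∈ [0,1]. Then ψ_t is convex on [0,1], ψ_t(0) = 0, ψ_t(1) = t, and hence ψ_t(x) ≤ t·x for all x ∈ [0,1]. -/
/-- Binary convolution `a ⋆ b = a(1-b) + b(1-a)`. -/
def bconv (a b : ℝ) : ℝ := a * (1 - b) + b * (1 - a)

/-!
Write `a = h⁻¹(1-t)`, `b = h⁻¹(x)`, `c = a ⋆ b` and `N(p) = log((1-p)/p)` (`negLogit`), which is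
`h'(p)` up to the factor `log 2`. Then `ψ_t'(x) = (1-2a) N(c) / N(b)`, and as `h⁻¹` is increasing,
convexity amounts to `N(a ⋆ b) / N(b)` being monotone in `b ∈ (0, 1/2)`. The derivative of this
quotient has the sign of `F(c) - (1-2a) F(b)` with `F(p) = p(1-p) N(p)`, which is nonnegative
because `F` is concave on `(0, 1/2]`, vanishes at `1/2`, and `c = (1-2a) b + 2a · 1/2`. The bound
`ψ_t(x) ≤ t x` is the chord inequality between `ψ_t(0) = 0` and `ψ_t(1) = t`.
-/

open Real Set

noncomputable def negLogit (p : ℝ) : ℝ := log (1 - p) - log p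

section negLogit

variable {p : ℝ}

lemma hasDerivAt_negLogit (hp0 : 0 < p) (hp1 : p < 1) :
    HasDerivAt negLogit (-(p * (1 - p))⁻¹) p := by
  have hlog : HasDerivAt (fun p => log (1 - p)) (-1 / (1 - p)) p :=
    ((hasDerivAt_id' p).const_sub 1).log (sub_pos.2 hp1).ne' |>.congr_deriv (by simp)
  refine (hlog.sub (hasDerivAt_log hp0.ne')).congr_deriv ?_
  field_simp [(by linarith : 1 - p ≠ 0)]
  ring

lemma negLogit_half : negLogit (1 / 2) = 0 := by norm_num [negLogit]

lemma negLogit_pos (hp0 : 0 < p) (hp : p < 1 / 2) : 0 < negLogit p :=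
  sub_pos.2 (log_lt_log hp0 (by linarith))

lemma negLogit_nonneg (hp0 : 0 < p) (hp : p ≤ 1 / 2) : 0 ≤ negLogit p :=
  sub_nonneg.2 (log_le_log hp0 (by linarith))

lemma antitoneOn_negLogit : AntitoneOn negLogit (Ioo 0 1) := fun p hp q hq hpq =>
  sub_le_sub (log_le_log (by linarith [hq.2]) (by linarith)) (log_le_log hp.1 hpq)

lemma concaveOn_mul_one_sub_mul_negLogit :
    ConcaveOn ℝ (Ioc 0 (1 / 2)) fun p => p * (1 - p) * negLogit p := by
  have hderiv : ∀ p ∈ Ioo (0 : ℝ) 1,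
      HasDerivAt (fun p => p * (1 - p) * negLogit p) ((1 - 2 * p) * negLogit p - 1) p := by
    intro p hp
    refine (((hasDerivAt_id' p).mul ((hasDerivAt_id' p).const_sub 1)).mul
      (hasDerivAt_negLogit hp.1 hp.2)).congr_deriv ?_
    simp only [Pi.mul_apply]
    field_simp [hp.1.ne', (by linarith [hp.2] : 1 - p ≠ 0)]
    ring
  have hsub : Ioc (0 : ℝ) (1 / 2) ⊆ Ioo 0 1 := fun p hp => ⟨hp.1, by linarith [hp.2]⟩
  refine AntitoneOn.concaveOn_of_deriv (convex_Ioc 0 _)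
    (fun p hp => (hderiv p (hsub hp)).continuousAt.continuousWithinAt)
    (fun p hp => (hderiv p (hsub (interior_subset hp))).differentiableAt.differentiableWithinAt) ?_
  rw [interior_Ioc]
  intro p hp q hq hpq
  rw [(hderiv p (hsub (Ioo_subset_Ioc_self hp))).deriv,
    (hderiv q (hsub (Ioo_subset_Ioc_self hq))).deriv]
  refine sub_le_sub_right (mul_le_mul (by linarith) ?_ (negLogit_nonneg hq.1 hq.2.le)
    (by linarith [hp.2])) 1
  exact antitoneOn_negLogit (hsub (Ioo_subset_Ioc_self hp)) (hsub (Ioo_subset_Ioc_self hq)) hpq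

end negLogit

section bconv

variable {a b : ℝ}

lemma bconv_eq_add_mul (a b : ℝ) : bconv a b = (1 - 2 * a) * b + 2 * a * (1 / 2) := by
  unfold bconv; ring

lemma hasDerivAt_bconv (a b : ℝ) : HasDerivAt (bconv a) (1 - 2 * a) b := by
  have h : bconv a = fun x => (1 - 2 * a) * x + a := funext fun x => by unfold bconv; ring
  rw [h]
  simpa using ((hasDerivAt_id' b).const_mul (1 - 2 * a)).add_const a

lemma bconv_mem_Ioc (ha0 : 0 ≤ a) (ha : a ≤ 1 / 2) (hb0 : 0 < b) (hb : b ≤ 1 / 2) :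
    bconv a b ∈ Ioc 0 (1 / 2) := by
  rw [bconv_eq_add_mul]
  constructor <;> nlinarith

lemma mul_one_sub_mul_negLogit_le_bconv (ha0 : 0 ≤ a) (ha : a ≤ 1 / 2) (hb0 : 0 < b)
    (hb : b ≤ 1 / 2) :
    (1 - 2 * a) * (b * (1 - b) * negLogit b) ≤
      bconv a b * (1 - bconv a b) * negLogit (bconv a b) := by
  have := concaveOn_mul_one_sub_mul_negLogit.2 ⟨hb0, hb⟩ ⟨by norm_num, le_rfl⟩
    (by linarith : 0 ≤ 1 - 2 * a) (by linarith : 0 ≤ 2 * a) (by ring)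
  simpa only [smul_eq_mul, ← bconv_eq_add_mul, negLogit_half, mul_zero, add_zero] using this

lemma monotoneOn_negLogit_bconv_div (ha0 : 0 ≤ a) (ha : a ≤ 1 / 2) :
    MonotoneOn (fun b => negLogit (bconv a b) / negLogit b) (Ioo 0 (1 / 2)) := by
  have hderiv : ∀ b ∈ Ioo (0 : ℝ) (1 / 2), HasDerivAt (fun b => negLogit (bconv a b) / negLogit b)
      ((-(bconv a b * (1 - bconv a b))⁻¹ * (1 - 2 * a) * negLogit b
        - negLogit (bconv a b) * -(b * (1 - b))⁻¹) / negLogit b ^ 2) b := by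
    intro b hb
    have hc := bconv_mem_Ioc ha0 ha hb.1 hb.2.le
    exact ((hasDerivAt_negLogit hc.1 (by linarith [hc.2])).comp b (hasDerivAt_bconv a b)).div
      (hasDerivAt_negLogit hb.1 (by linarith [hb.2])) (negLogit_pos hb.1 hb.2).ne'
  refine monotoneOn_of_hasDerivWithinAt_nonneg (convex_Ioo 0 _)
    (fun b hb => (hderiv b hb).continuousAt.continuousWithinAt)
    (fun b hb => (hderiv b (interior_subset hb)).hasDerivWithinAt) ?_
  rw [interior_Ioo]
  intro b hb
  obtain ⟨hc0, hc⟩ := bconv_mem_Ioc ha0 ha hb.1 hb.2.le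
  have hP : 0 < b * (1 - b) := mul_pos hb.1 (by linarith [hb.2])
  have hQ : 0 < bconv a b * (1 - bconv a b) := mul_pos hc0 (by linarith)
  have key := mul_one_sub_mul_negLogit_le_bconv ha0 ha hb.1 hb.2.le
  refine div_nonneg ?_ (sq_nonneg _)
  calc (0 : ℝ) ≤ negLogit (bconv a b) / (b * (1 - b))
        - (1 - 2 * a) * negLogit b / (bconv a b * (1 - bconv a b)) := by
        rw [sub_nonneg, div_le_div_iff₀ hQ hP]
        linarith
    _ = _ := by ring

end bconv

section hbin

lemma hbin_eq_binEntropy_div (p : ℝ) : hbin p = binEntropy p / log 2 := by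
  simp only [hbin, binEntropy, logb, log_inv]
  ring

lemma continuous_hbin : Continuous hbin := by
  simp only [funext hbin_eq_binEntropy_div]
  fun_prop

lemma hasDerivAt_hbin {p : ℝ} (hp0 : 0 < p) (hp1 : p < 1) :
    HasDerivAt hbin (negLogit p / log 2) p := by
  simp only [funext hbin_eq_binEntropy_div]
  exact (hasDerivAt_binEntropy hp0.ne' hp1.ne).div_const _

lemma hbin_zero : hbin 0 = 0 := by simp [hbin_eq_binEntropy_div]

lemma hbin_half : hbin (1 / 2) = 1 := by
  simp [hbin_eq_binEntropy_div, (log_pos one_lt_two).ne']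

lemma strictMonoOn_hbin : StrictMonoOn hbin (Icc 0 (1 / 2)) := fun p hp q hq hpq => by
  simp only [hbin_eq_binEntropy_div]
  exact div_lt_div_of_pos_right
    (binEntropy_strictMonoOn (by simpa using hp) (by simpa using hq) hpq) (log_pos one_lt_two)

lemma hbin_mem_Icc {p : ℝ} (hp : p ∈ Icc (0 : ℝ) (1 / 2)) : hbin p ∈ Icc (0 : ℝ) 1 := by
  rw [← hbin_zero, ← hbin_half]
  exact ⟨strictMonoOn_hbin.monotoneOn ⟨le_rfl, by norm_num⟩ hp hp.1,
    strictMonoOn_hbin.monotoneOn hp ⟨by norm_num, le_rfl⟩ hp.2⟩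

end hbin

section hinv

variable {hinv : ℝ → ℝ}
  (hhinv : ∀ y ∈ Icc (0 : ℝ) 1, hinv y ∈ Icc (0 : ℝ) (1 / 2) ∧ hbin (hinv y) = y)
include hhinv

lemma hinv_hbin {p : ℝ} (hp : p ∈ Icc (0 : ℝ) (1 / 2)) : hinv (hbin p) = p :=
  strictMonoOn_hbin.injOn (hhinv _ (hbin_mem_Icc hp)).1 hp (hhinv _ (hbin_mem_Icc hp)).2

lemma hinv_zero : hinv 0 = 0 := by
  simpa only [hbin_zero] using hinv_hbin hhinv (p := 0) ⟨le_rfl, by norm_num⟩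

lemma hinv_one : hinv 1 = 1 / 2 := by
  simpa only [hbin_half] using hinv_hbin hhinv (p := 1 / 2) ⟨by norm_num, le_rfl⟩

lemma strictMonoOn_hinv : StrictMonoOn hinv (Icc 0 1) := fun x hx y hy hxy =>
  lt_of_not_ge fun h => hxy.not_ge <| by
    simpa only [(hhinv x hx).2, (hhinv y hy).2] using
      strictMonoOn_hbin.monotoneOn (hhinv y hy).1 (hhinv x hx).1 h

lemma hinv_mem_Ioo {x : ℝ} (hx : x ∈ Ioo (0 : ℝ) 1) : hinv x ∈ Ioo (0 : ℝ) (1 / 2) := by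
  have hmono := strictMonoOn_hinv hhinv
  rw [← hinv_zero hhinv, ← hinv_one hhinv]
  exact ⟨hmono (left_mem_Icc.2 zero_le_one) (Ioo_subset_Icc_self hx) hx.1,
    hmono (Ioo_subset_Icc_self hx) (right_mem_Icc.2 zero_le_one) hx.2⟩

lemma continuousOn_hinv : ContinuousOn hinv (Icc 0 1) := by
  let g : Icc (0 : ℝ) 1 → Icc (0 : ℝ) (1 / 2) := fun x => ⟨hinv x, (hhinv x x.2).1⟩
  have hg : Continuous g := by
    refine Monotone.continuous_of_surjective (fun x y hxy => ?_) (fun p => ?_)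
    · exact (strictMonoOn_hinv hhinv).monotoneOn x.2 y.2 hxy
    · exact ⟨⟨hbin p, hbin_mem_Icc p.2⟩, Subtype.ext (hinv_hbin hhinv p.2)⟩
  exact continuousOn_iff_continuous_domRestrict.2 (continuous_subtype_val.comp hg)

lemma hasDerivAt_hinv {x : ℝ} (hx : x ∈ Ioo (0 : ℝ) 1) :
    HasDerivAt hinv (log 2 / negLogit (hinv x)) x := by
  have hb := hinv_mem_Ioo hhinv hx
  have hderiv := HasDerivAt.of_local_left_inverse
    ((continuousOn_hinv hhinv).continuousAt (Icc_mem_nhds hx.1 hx.2))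
    (hasDerivAt_hbin hb.1 (by linarith [hb.2]))
    (div_ne_zero (negLogit_pos hb.1 hb.2).ne' (log_pos one_lt_two).ne')
    (Filter.eventually_of_mem (Ioo_mem_nhds hx.1 hx.2) fun y hy =>
      (hhinv y (Ioo_subset_Icc_self hy)).2)
  rwa [inv_div] at hderiv

section

variable {a : ℝ} (ha : a ∈ Icc (0 : ℝ) (1 / 2))
include ha

lemma hasDerivAt_hbin_bconv_hinv {x : ℝ} (hx : x ∈ Ioo (0 : ℝ) 1) :
    HasDerivAt (fun x => hbin (bconv a (hinv x)))
      ((1 - 2 * a) * (negLogit (bconv a (hinv x)) / negLogit (hinv x))) x := by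
  have hb := hinv_mem_Ioo hhinv hx
  have hc := bconv_mem_Ioc ha.1 ha.2 hb.1 hb.2.le
  refine ((hasDerivAt_hbin hc.1 (by linarith [hc.2])).comp x
    ((hasDerivAt_bconv a _).comp x (hasDerivAt_hinv hhinv hx))).congr_deriv ?_
  field_simp [(log_pos one_lt_two).ne', (negLogit_pos hb.1 hb.2).ne']

lemma convexOn_hbin_bconv_hinv : ConvexOn ℝ (Icc 0 1) fun x => hbin (bconv a (hinv x)) := by
  refine MonotoneOn.convexOn_of_deriv (convex_Icc 0 1) ?_ ?_ ?_
  · have : Continuous (bconv a) := by unfold bconv; fun_prop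
    exact continuous_hbin.comp_continuousOn (this.comp_continuousOn (continuousOn_hinv hhinv))
  · rw [interior_Icc]
    exact fun x hx =>
      (hasDerivAt_hbin_bconv_hinv hhinv ha hx).differentiableAt.differentiableWithinAt
  rw [interior_Icc]
  intro x hx y hy hxy
  rw [(hasDerivAt_hbin_bconv_hinv hhinv ha hx).deriv,
    (hasDerivAt_hbin_bconv_hinv hhinv ha hy).deriv]
  refine mul_le_mul_of_nonneg_left ?_ (by linarith [ha.2])
  exact monotoneOn_negLogit_bconv_div ha.1 ha.2 (hinv_mem_Ioo hhinv hx) (hinv_mem_Ioo hhinv hy)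
    ((strictMonoOn_hinv hhinv).monotoneOn (Ioo_subset_Icc_self hx) (Ioo_subset_Icc_self hy) hxy)

end

end hinv

lemma ConvexOn.le_mul_of_map_zero {f : ℝ → ℝ} (hf : ConvexOn ℝ (Icc 0 1) f) (h0 : f 0 = 0)
    {x : ℝ} (hx : x ∈ Icc (0 : ℝ) 1) : f x ≤ f 1 * x := by
  have := hf.2 (left_mem_Icc.2 zero_le_one) (right_mem_Icc.2 zero_le_one) (sub_nonneg.2 hx.2) hx.1
    (sub_add_cancel 1 x)
  simp only [smul_eq_mul, mul_zero, mul_one, zero_add, h0] at this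
  linarith

/-- `ψ_t(x) = h(h⁻¹(1-t) ⋆ h⁻¹(x)) - (1-t)` is convex on `[0,1]`, with `ψ_t(0)=0`,
`ψ_t(1)=t`, hence `ψ_t(x) ≤ t·x` on `[0,1]`. -/
theorem psi_convex_and_le (hinv : ℝ → ℝ)
    (hhinv : ∀ y ∈ Set.Icc (0:ℝ) 1, hinv y ∈ Set.Icc (0:ℝ) (1/2) ∧ hbin (hinv y) = y)
    (t : ℝ) (ht : t ∈ Set.Icc (0:ℝ) 1) :
    ConvexOn ℝ (Set.Icc (0:ℝ) 1) (fun x => hbin (bconv (hinv (1 - t)) (hinv x)) - (1 - t)) ∧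
    (hbin (bconv (hinv (1 - t)) (hinv 0)) - (1 - t) = 0) ∧
    (hbin (bconv (hinv (1 - t)) (hinv 1)) - (1 - t) = t) ∧
    ∀ x ∈ Set.Icc (0:ℝ) 1, hbin (bconv (hinv (1 - t)) (hinv x)) - (1 - t) ≤ t * x := by
  obtain ⟨ha, hha⟩ := hhinv (1 - t) ⟨by linarith [ht.2], by linarith [ht.1]⟩
  have hconv : ConvexOn ℝ (Icc 0 1) fun x => hbin (bconv (hinv (1 - t)) (hinv x)) - (1 - t) :=
    (convexOn_hbin_bconv_hinv hhinv ha).sub (concaveOn_const _ (convex_Icc 0 1))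
  have hψ0 : hbin (bconv (hinv (1 - t)) (hinv 0)) - (1 - t) = 0 := by
    simp [hinv_zero hhinv, bconv, hha]
  have hψ1 : hbin (bconv (hinv (1 - t)) (hinv 1)) - (1 - t) = t := by
    rw [hinv_one hhinv, show bconv (hinv (1 - t)) (1 / 2) = 1 / 2 by unfold bconv; ring, hbin_half]
    ring
  refine ⟨hconv, hψ0, hψ1, fun x hx => ?_⟩
  simpa only [hψ1] using hconv.le_mul_of_map_zero hψ0 hx
end
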